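/- arXiv:1505.00928 — 2 statements merged into one kernel-verified Lean document; each statement's English description precedes it below -/
import Mathlib

section
/- Let φ : ℝ → ℝ be continuously differentiable with φ′ ∈ L²(ℝ), and for j ∈ ℤ set Φ_j = ∫_{x_{j−1/2}}^{x_{j+1/2}} φ(x) dx. Then for every j ∈ ℤ, |Φ_j − Φ_{j−1}| ≤ 2Δx^{3/2} (∫_{x_{j−3/2}}^{x_{j+1/2}} |φ′(x)|² dx)^{1/2}; equivalently, |D₋Φ_j| ≤ 2Δx^{1/2} (∫_{x_{j−3/2}}^{x_{j+1/2}} |φ′(x)|² dx)^{1/2}. -/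
open MeasureTheory Filter Set

noncomputable section

/-- The sup-norm `‖g‖_∞` of a function `g : ℝ → ℝ`. -/
def supNorm (g : ℝ → ℝ) : ℝ := ⨆ x, |g x|

/-- The total variation `TV(k)` of a function `k : ℝ → ℝ`. -/
def totalVar (k : ℝ → ℝ) : ℝ := (eVariationOn k Set.univ).toReal

/-- The Engquist–Osher numerical flux associated to `f`. -/
def eoFlux (f : ℝ → ℝ) (u v : ℝ) : ℝ :=
  (f u + f v) / 2 - (∫ s in u..v, |deriv f s|) / 2

/-- The cell averages `k_{j+1/2} = (1/Δx) ∫_{x_j}^{x_{j+1}} k`. -/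
def kAvg (k : ℝ → ℝ) (dx : ℝ) (j : ℤ) : ℝ :=
  (1 / dx) * ∫ x in ((j : ℝ) * dx)..((j : ℝ) * dx + dx), k x

/-- The sign-adapted Engquist–Osher flux `f̂_{j+1/2}`, with arguments transposed when the
coefficient `kh j` is negative. -/
def signFlux (f : ℝ → ℝ) (kh : ℤ → ℝ) (v : ℤ → ℝ) (j : ℤ) : ℝ :=
  if 0 ≤ kh j then eoFlux f (v j) (v (j + 1)) else eoFlux f (v (j + 1)) (v j)

/-- The numerical flux `h_{j+1/2} = k_{j+1/2} f̂_{j+1/2}`. -/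
def numFlux (f k : ℝ → ℝ) (dx : ℝ) (v : ℤ → ℝ) (j : ℤ) : ℝ :=
  kAvg k dx j * signFlux f (kAvg k dx) v j

/-- Backward difference `D₋v_j = (v_j - v_{j-1})/Δx`. -/
def Dm (dx : ℝ) (v : ℤ → ℝ) (j : ℤ) : ℝ := (v j - v (j - 1)) / dx

/-- Forward difference `D₊v_j = (v_{j+1} - v_j)/Δx`. -/
def Dp (dx : ℝ) (v : ℤ → ℝ) (j : ℤ) : ℝ := (v (j + 1) - v j) / dx

/-- The square of the discrete `ℓ²` norm: `‖v‖² = Δx Σ_j v_j²`. -/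
def l2sq (dx : ℝ) (v : ℤ → ℝ) : ℝ := dx * ∑' j : ℤ, (v j) ^ 2

/-- The fully-discrete capillarity scheme
`D₊ᵗu^n_j + D₋h^n_{j+1/2} = βΔx·D₊D₋u^n_j + γμ(Δx)·D₊ᵗD₊D₋u^n_j`
with initial data the cell averages of `u0`. -/
def capScheme (f k u0 : ℝ → ℝ) (β γ μ dx dt : ℝ) (u : ℕ → ℤ → ℝ) : Prop :=
  (∀ j : ℤ, u 0 j =
      (1 / dx) * ∫ x in ((j : ℝ) * dx - dx / 2)..((j : ℝ) * dx + dx / 2), u0 x) ∧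
  ∀ (n : ℕ) (j : ℤ),
    (u (n + 1) j - u n j) / dt + Dm dx (numFlux f k dx (u n)) j
      = β * dx * Dp dx (Dm dx (u n)) j
        + γ * μ * ((Dp dx (Dm dx (u (n + 1))) j - Dp dx (Dm dx (u n)) j) / dt)

/-- The fully-discrete diffusive–dispersive scheme
`D₊ᵗu^n_j + D₋h^n_{j+1/2} = βΔx·D₊D₋u^n_j + γμ(Δx)·D₊D₋D₋u^n_j`
with initial data the cell averages of `u0`. -/
def ddScheme (f k u0 : ℝ → ℝ) (β γ μ dx dt : ℝ) (u : ℕ → ℤ → ℝ) : Prop :=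
  (∀ j : ℤ, u 0 j =
      (1 / dx) * ∫ x in ((j : ℝ) * dx - dx / 2)..((j : ℝ) * dx + dx / 2), u0 x) ∧
  ∀ (n : ℕ) (j : ℤ),
    (u (n + 1) j - u n j) / dt + Dm dx (numFlux f k dx (u n)) j
      = β * dx * Dp dx (Dm dx (u n)) j
        + γ * μ * Dp dx (Dm dx (Dm dx (u n))) j

/-- The CFL condition for the capillarity scheme. -/
def cflCap (f k : ℝ → ℝ) (β γ μ dx dt δ : ℝ) : Prop :=
  max (2 * max (supNorm f) (max (supNorm (deriv f)) (supNorm k)) + (dt / dx) / 2)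
      ((dt / dx) / 2 * (1 + β * dx ^ 2 / (γ * μ)))
    ≤ min (1 - δ) (β - δ)

/-- The explicit CFL condition for the diffusive–dispersive scheme. -/
def cflDD (f k : ℝ → ℝ) (β γ μ dx dt δ : ℝ) : Prop :=
  max (2 * (dt / dx) * (β ^ 2 * dx ^ 2 / (γ * μ) + 2 * γ * μ / dx ^ 2))
      (8 * (dt / dx) * supNorm k ^ 2 * supNorm (deriv f) ^ 2)
    ≤ min (1 - δ) (β - δ)

/-- The piecewise-constant interpolant `u_{Δx}(x,t) = u^n_j` on
`[x_{j-1/2}, x_{j+1/2}) × [t^n, t^{n+1})`. -/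
def pcInterp (dx dt : ℝ) (u : ℕ → ℤ → ℝ) (p : ℝ × ℝ) : ℝ :=
  u (⌊p.2 / dt⌋.toNat) ⌊p.1 / dx + 1 / 2⌋

/-- Finite support of the grid function at each time level. -/
def finSupp (u : ℕ → ℤ → ℝ) : Prop :=
  ∀ n : ℕ, ∃ J : ℕ, ∀ j : ℤ, (J : ℤ) < |j| → u n j = 0

/-- The `i`-th open interval of the partition of `ℝ` induced by the points `ξ 0 < ⋯ < ξ (M-1)`. -/
def pieceSet (M : ℕ) (ξ : Fin M → ℝ) (i : Fin (M + 1)) : Set ℝ :=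
  {x | (∀ m : Fin M, (m : ℕ) < (i : ℕ) → ξ m < x) ∧ (∀ m : Fin M, (i : ℕ) ≤ (m : ℕ) → x < ξ m)}

/-- `k` is piecewise Lipschitz: on each piece of the partition induced by `ξ`, it agrees with a
globally Lipschitz function (in particular it is Lipschitz on the closure of each piece, up to
redefining it at the partition points). -/
def piecewiseLip (M : ℕ) (ξ : Fin M → ℝ) (k : ℝ → ℝ) : Prop :=
  ∀ i : Fin (M + 1), ∃ (κ : ℝ → ℝ) (L : NNReal),
    LipschitzWith L κ ∧ ∀ x ∈ pieceSet M ξ i, k x = κ x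

end

/-! The difference of neighbouring cell integrals is an integral of `φ x - φ (x - Δx)` over one
cell, each such increment is at most `∫ |φ'|` over the two cells, and Cauchy–Schwarz on those two
cells turns this into `√(2Δx) ‖φ'‖_{L²}`; finally `√2 ≤ 2`. -/

open intervalIntegral

theorem integral_abs_le_sqrt_mul_sqrt_integral_sq {g : ℝ → ℝ} {a b : ℝ} (hab : a ≤ b)
    (hg : MemLp g 2 (volume.restrict (Ioc a b))) :
    ∫ x in a..b, |g x| ≤ √(b - a) * √(∫ x in a..b, g x ^ 2) := by
  set μ := volume.restrict (Ioc a b)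
  have hμ : μ univ = ENNReal.ofReal (b - a) := by
    rw [Measure.restrict_apply_univ, Real.volume_Ioc]
  have : IsFiniteMeasure μ := ⟨by rw [hμ]; exact ENNReal.ofReal_lt_top⟩
  have hg2 : MemLp g (ENNReal.ofReal 2) μ := by rwa [ENNReal.ofReal_ofNat]
  have hone : MemLp (fun _ ↦ (1 : ℝ)) (ENNReal.ofReal 2) μ := memLp_const 1
  have holder := integral_mul_norm_le_Lp_mul_Lq Real.HolderConjugate.two_two hg2 hone
  simp only [norm_one, mul_one, Real.norm_eq_abs, Real.rpow_two, sq_abs, one_pow,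
    MeasureTheory.integral_const, smul_eq_mul, measureReal_def, hμ,
    ENNReal.toReal_ofReal (sub_nonneg.2 hab), ← Real.sqrt_eq_rpow] at holder
  simpa only [integral_of_le hab, mul_comm (√(b - a))] using holder

theorem integral_sub_integral_comp_sub_right {φ : ℝ → ℝ} (hφ : Continuous φ) (a b h : ℝ) :
    (∫ x in a..b, φ x) - ∫ x in (a - h)..(b - h), φ x = ∫ x in a..b, (φ x - φ (x - h)) := by
  rw [← integral_comp_sub_right φ h]
  exact (integral_sub (hφ.intervalIntegrable _ _)
    ((hφ.comp (continuous_sub_right h)).intervalIntegrable _ _)).symm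

theorem abs_sub_le_integral_abs_deriv {φ : ℝ → ℝ} (hφ : ContDiff ℝ 1 φ) {a b : ℝ} (hab : a ≤ b) :
    |φ b - φ a| ≤ ∫ x in a..b, |deriv φ x| := by
  rw [← integral_deriv_eq_sub (fun x _ ↦ hφ.differentiable one_ne_zero x)
    ((hφ.continuous_deriv le_rfl).intervalIntegrable _ _)]
  exact abs_integral_le_integral_abs hab

theorem abs_integral_sub_integral_shift_le {φ : ℝ → ℝ} (hφ : ContDiff ℝ 1 φ) (a : ℝ)
    {h : ℝ} (hh : 0 ≤ h) :
    |(∫ x in a..(a + h), φ x) - ∫ x in (a - h)..a, φ x|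
      ≤ h * ∫ x in (a - h)..(a + h), |deriv φ x| := by
  have hincr : ∀ x ∈ uIoc a (a + h),
      ‖φ x - φ (x - h)‖ ≤ ∫ t in (a - h)..(a + h), |deriv φ t| := by
    intro x hx
    rw [uIoc_of_le (by linarith)] at hx
    calc ‖φ x - φ (x - h)‖ ≤ ∫ t in (x - h)..x, |deriv φ t| :=
          abs_sub_le_integral_abs_deriv hφ (by linarith)
      _ ≤ ∫ t in (a - h)..(a + h), |deriv φ t| :=
          integral_mono_interval (by linarith [hx.1]) (by linarith) (by linarith [hx.2])
            (.of_forall fun t ↦ abs_nonneg _)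
            ((hφ.continuous_deriv le_rfl).abs.intervalIntegrable _ _)
  have := norm_integral_le_of_norm_le_const hincr
  rwa [← integral_sub_integral_comp_sub_right hφ.continuous, add_sub_cancel_right,
    add_sub_cancel_left, abs_of_nonneg hh, mul_comm, Real.norm_eq_abs] at this

theorem abs_integral_sub_integral_shift_le_sqrt {φ : ℝ → ℝ} (hφ : ContDiff ℝ 1 φ) (a : ℝ)
    {h : ℝ} (hh : 0 ≤ h) :
    |(∫ x in a..(a + h), φ x) - ∫ x in (a - h)..a, φ x|
      ≤ 2 * h * √h * √(∫ x in (a - h)..(a + h), deriv φ x ^ 2) := by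
  have hcont := hφ.continuous_deriv le_rfl
  have hL2 : MemLp (deriv φ) 2 (volume.restrict (Ioc (a - h) (a + h))) :=
    (memLp_two_iff_integrable_sq hcont.aestronglyMeasurable).2
      ((hcont.pow 2).integrableOn_Ioc)
  have hCS := integral_abs_le_sqrt_mul_sqrt_integral_sq (by linarith) hL2
  have hsqrt : √(a + h - (a - h)) ≤ 2 * √h := by
    rw [show a + h - (a - h) = 2 * h by ring, Real.sqrt_mul zero_le_two]
    gcongr
    exact (Real.sqrt_le_left zero_le_two).2 (by norm_num)
  calc _ ≤ h * ∫ x in (a - h)..(a + h), |deriv φ x| := abs_integral_sub_integral_shift_le hφ a hh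
    _ ≤ h * (2 * √h * √(∫ x in (a - h)..(a + h), deriv φ x ^ 2)) := by
        gcongr
        exact hCS.trans (by gcongr)
    _ = _ := by ring

theorem cellAverage_difference_bound_general (φ : ℝ → ℝ) (dx : ℝ) (hdx : 0 < dx)
    (hφ : ContDiff ℝ 1 φ) :
    ∀ j : ℤ,
      |(∫ x in ((j : ℝ) * dx - dx / 2)..((j : ℝ) * dx + dx / 2), φ x) -
          ∫ x in (((j : ℝ) - 1) * dx - dx / 2)..(((j : ℝ) - 1) * dx + dx / 2), φ x|
        ≤ 2 * dx * Real.sqrt dx *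
            Real.sqrt (∫ x in ((j : ℝ) * dx - 3 * dx / 2)..((j : ℝ) * dx + dx / 2),
              (deriv φ x) ^ 2) ∧
      |((∫ x in ((j : ℝ) * dx - dx / 2)..((j : ℝ) * dx + dx / 2), φ x) -
          ∫ x in (((j : ℝ) - 1) * dx - dx / 2)..(((j : ℝ) - 1) * dx + dx / 2), φ x) / dx|
        ≤ 2 * Real.sqrt dx *
            Real.sqrt (∫ x in ((j : ℝ) * dx - 3 * dx / 2)..((j : ℝ) * dx + dx / 2),
              (deriv φ x) ^ 2) := by
  intro j
  set a := (j : ℝ) * dx - dx / 2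
  rw [show ((j : ℝ) - 1) * dx - dx / 2 = a - dx by ring,
    show ((j : ℝ) - 1) * dx + dx / 2 = a by ring, show (j : ℝ) * dx + dx / 2 = a + dx by ring,
    show (j : ℝ) * dx - 3 * dx / 2 = a - dx by ring]
  have hbound := abs_integral_sub_integral_shift_le_sqrt hφ a hdx.le
  refine ⟨hbound, ?_⟩
  rw [abs_div, abs_of_pos hdx, div_le_iff₀ hdx]
  linarith

/-- bound on the backward difference of cell averages of a `C¹` function `φ` with
`φ' ∈ L²(ℝ)` in terms of the local `L²` norm of `φ'`. -/
theorem cellAverage_difference_bound (φ : ℝ → ℝ) (dx : ℝ) (hdx : 0 < dx)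
    (hφ : ContDiff ℝ 1 φ)
    (hφ' : MemLp (deriv φ) 2 volume) :
    ∀ j : ℤ,
      |(∫ x in ((j : ℝ) * dx - dx / 2)..((j : ℝ) * dx + dx / 2), φ x) -
          ∫ x in (((j : ℝ) - 1) * dx - dx / 2)..(((j : ℝ) - 1) * dx + dx / 2), φ x|
        ≤ 2 * dx * Real.sqrt dx *
            Real.sqrt (∫ x in ((j : ℝ) * dx - 3 * dx / 2)..((j : ℝ) * dx + dx / 2),
              (deriv φ x) ^ 2) ∧
      |((∫ x in ((j : ℝ) * dx - dx / 2)..((j : ℝ) * dx + dx / 2), φ x) -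
          ∫ x in (((j : ℝ) - 1) * dx - dx / 2)..(((j : ℝ) - 1) * dx + dx / 2), φ x) / dx|
        ≤ 2 * Real.sqrt dx *
            Real.sqrt (∫ x in ((j : ℝ) * dx - 3 * dx / 2)..((j : ℝ) * dx + dx / 2),
              (deriv φ x) ^ 2) :=
  cellAverage_difference_bound_general φ dx hdx hφ
end

section
/- Let f ∈ C¹(ℝ) be bounded with bounded derivative, f̂ its Engquist–Osher flux, and k ∈ L^∞(ℝ) ∩ BV(ℝ) with cell averages k_{j+1/2}. Let (u^n_j) be grid values vanishing for |j| sufficiently large, and let h^n_{j+1/2} = k_{j+1/2} f̂^n_{j+1/2} be the sign-adapted numerical flux. Then for every n: Δt·‖D₋h^n‖² ≤ 4λ·‖k‖_∞·‖f‖_∞²·TV(k) + 4Δt·‖k‖_∞²·‖f′‖_∞²·(‖D₋u^n‖² + ‖D₊u^n‖²), where TV(k) is the total variation of k and ‖·‖ is the discrete ℓ² norm. -/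
open MeasureTheory Filter Set

/-!
Write `h_j - h_{j-1} = (k_{j+1/2} - k_{j-1/2}) f(u_j) + k_{j+1/2} (f̂_{j+1/2} - f(u_j))
- k_{j-1/2} (f̂_{j-1/2} - f(u_j))`. The Engquist–Osher flux `f̂(a, b)` lies within
`‖f'‖_∞ |b - a|` of both `f(a)` and `f(b)`, so the sign-adapted transposition is harmless and the
last two terms are bounded by `‖k‖_∞ ‖f'‖_∞` times the jumps of `u`. After squaring, one factor of
the coefficient jump is bounded by `2‖k‖_∞`, and the remaining linear sum
`Σ_j |k_{j+1/2} - k_{j-1/2}|` is at most `TV(k)`: each difference of cell averages is the average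
over `y ∈ (0, Δx)` of `k(y + jΔx) - k(y + (j-1)Δx)`, and for fixed `y` these grid differences sum
to at most `TV(k)`.
-/

lemma abs_le_supNorm {g : ℝ → ℝ} (hg : ∃ C, ∀ x, |g x| ≤ C) (x : ℝ) : |g x| ≤ supNorm g := by
  obtain ⟨C, hC⟩ := hg
  exact le_ciSup ⟨C, by rintro _ ⟨y, rfl⟩; exact hC y⟩ x

lemma abs_eoFlux_sub_le {f : ℝ → ℝ} {L : ℝ} (hf : Differentiable ℝ f)
    (hL : ∀ x, |deriv f x| ≤ L) (u v : ℝ) :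
    |eoFlux f u v - f u| ≤ L * |v - u| ∧ |eoFlux f u v - f v| ≤ L * |v - u| := by
  have hlip : |f v - f u| ≤ L * |v - u| :=
    convex_univ.norm_image_sub_le_of_norm_deriv_le (fun x _ => hf x) (fun x _ => hL x)
      (mem_univ u) (mem_univ v)
  have hint : |(∫ s in u..v, |deriv f s|)| ≤ L * |v - u| :=
    intervalIntegral.norm_integral_le_of_norm_le_const (f := fun s => |deriv f s|) fun x _ => by
      simpa only [Real.norm_eq_abs, abs_abs] using hL x
  have hleft : eoFlux f u v - f u = (f v - f u) / 2 - (∫ s in u..v, |deriv f s|) / 2 := by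
    unfold eoFlux; ring
  have hright : eoFlux f u v - f v = -(f v - f u) / 2 - (∫ s in u..v, |deriv f s|) / 2 := by
    unfold eoFlux; ring
  rw [hleft, hright]
  constructor <;>
  · refine (abs_sub _ _).trans ?_
    simp only [abs_div, abs_neg, abs_two]
    linarith

section SignFlux

variable {f : ℝ → ℝ} {L : ℝ} (kh v : ℤ → ℝ) (j : ℤ)

lemma abs_signFlux_sub_left_le (hf : Differentiable ℝ f) (hL : ∀ x, |deriv f x| ≤ L) :
    |signFlux f kh v j - f (v j)| ≤ L * |v (j + 1) - v j| := by
  unfold signFlux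
  split_ifs
  · exact (abs_eoFlux_sub_le hf hL _ _).1
  · rw [abs_sub_comm (v (j + 1))]
    exact (abs_eoFlux_sub_le hf hL _ _).2

lemma abs_signFlux_sub_right_le (hf : Differentiable ℝ f) (hL : ∀ x, |deriv f x| ≤ L) :
    |signFlux f kh v j - f (v (j + 1))| ≤ L * |v (j + 1) - v j| := by
  unfold signFlux
  split_ifs
  · exact (abs_eoFlux_sub_le hf hL _ _).2
  · rw [abs_sub_comm (v (j + 1))]
    exact (abs_eoFlux_sub_le hf hL _ _).1

end SignFlux

lemma abs_kAvg_le {k : ℝ → ℝ} {dx K : ℝ} (hdx : 0 < dx) (hK : ∀ x, |k x| ≤ K) (j : ℤ) :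
    |kAvg k dx j| ≤ K := by
  have hint : |∫ x in ((j : ℝ) * dx)..((j : ℝ) * dx + dx), k x| ≤ K * dx := by
    simpa [abs_of_pos hdx] using
      intervalIntegral.norm_integral_le_of_norm_le_const (a := (j : ℝ) * dx)
        (b := (j : ℝ) * dx + dx) fun x _ => (Real.norm_eq_abs (k x)).trans_le (hK x)
  rw [kAvg, abs_mul, abs_of_pos (one_div_pos.2 hdx), one_div, inv_mul_le_iff₀ hdx]
  linarith

lemma sum_range_abs_sub_le_totalVar {k : ℝ → ℝ} (hk : BoundedVariationOn k univ) {p : ℕ → ℝ}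
    (hp : Monotone p) (N : ℕ) :
    ∑ i ∈ Finset.range N, |k (p (i + 1)) - k (p i)| ≤ totalVar k := by
  rw [totalVar, ← ENNReal.ofReal_le_iff_le_toReal hk,
    ENNReal.ofReal_sum_of_nonneg fun i _ => abs_nonneg _]
  simpa only [edist_dist, Real.dist_eq] using
    eVariationOn.sum_le (f := k) (s := univ) hp fun i => mem_univ _

lemma sum_abs_sub_grid_le_totalVar {k : ℝ → ℝ} (hk : BoundedVariationOn k univ) {dx : ℝ}
    (hdx : 0 ≤ dx) (y : ℝ) (S : Finset ℤ) :
    ∑ j ∈ S, |k (y + j * dx) - k (y + (j - 1) * dx)| ≤ totalVar k := by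
  set N := S.sup Int.natAbs + 1
  have hS : ∀ j ∈ S, j.natAbs < N := fun j hj => Nat.lt_succ_of_le (Finset.le_sup hj)
  set p : ℕ → ℝ := fun i => y + ((i : ℝ) - N) * dx
  have hp : Monotone p := fun i i' h => by
    have : (i : ℝ) ≤ i' := by exact_mod_cast h
    simp only [p]
    nlinarith
  have hsub : S ⊆ (Finset.range (2 * N)).image fun i : ℕ => (i : ℤ) - N + 1 := fun j hj => by
    have := hS j hj
    simp only [Finset.mem_image, Finset.mem_range]
    exact ⟨(j + N - 1).toNat, by omega, by omega⟩
  calc ∑ j ∈ S, |k (y + j * dx) - k (y + (j - 1) * dx)|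
      ≤ ∑ j ∈ (Finset.range (2 * N)).image (fun i : ℕ => (i : ℤ) - N + 1),
          |k (y + j * dx) - k (y + (j - 1) * dx)| :=
        Finset.sum_le_sum_of_subset_of_nonneg hsub fun _ _ _ => abs_nonneg _
    _ = ∑ i ∈ Finset.range (2 * N), |k (p (i + 1)) - k (p i)| := by
        rw [Finset.sum_image fun a _ b _ h => by simpa using h]
        refine Finset.sum_congr rfl fun i _ => ?_
        simp only [p]
        push_cast
        ring_nf
    _ ≤ totalVar k := sum_range_abs_sub_le_totalVar hk hp _

lemma kAvg_eq_integral_shift (k : ℝ → ℝ) (dx : ℝ) (j : ℤ) :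
    kAvg k dx j = 1 / dx * ∫ y in (0 : ℝ)..dx, k (y + j * dx) := by
  rw [kAvg, intervalIntegral.integral_comp_add_right, zero_add, add_comm dx]

lemma sum_abs_kAvg_sub_le_totalVar {k : ℝ → ℝ} {dx : ℝ} (hdx : 0 < dx)
    (hk : BoundedVariationOn k univ) (hkloc : LocallyIntegrable k volume) (S : Finset ℤ) :
    ∑ j ∈ S, |kAvg k dx j - kAvg k dx (j - 1)| ≤ totalVar k := by
  set g : ℤ → ℝ → ℝ := fun j y => |k (y + j * dx) - k (y + (j - 1) * dx)|
  have hshift : ∀ c : ℝ, IntervalIntegrable (fun y => k (y + c)) volume 0 dx := fun c => by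
    simpa using ((hkloc.integrableOn_isCompact isCompact_uIcc).intervalIntegrable
      (a := c) (b := dx + c)).comp_add_right c
  have hg : ∀ j, IntervalIntegrable (g j) volume 0 dx := fun j =>
    ((hshift _).sub (hshift _)).abs
  have hterm : ∀ j, |kAvg k dx j - kAvg k dx (j - 1)| ≤ 1 / dx * ∫ y in (0 : ℝ)..dx, g j y := by
    intro j
    rw [kAvg_eq_integral_shift, kAvg_eq_integral_shift, Int.cast_sub, Int.cast_one, ← mul_sub,
      ← intervalIntegral.integral_sub (hshift _) (hshift _), abs_mul,
      abs_of_pos (one_div_pos.2 hdx)]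
    gcongr
    simpa only [Real.norm_eq_abs] using intervalIntegral.norm_integral_le_integral_norm
      (f := fun y => k (y + j * dx) - k (y + (j - 1) * dx)) hdx.le
  calc ∑ j ∈ S, |kAvg k dx j - kAvg k dx (j - 1)|
      ≤ ∑ j ∈ S, 1 / dx * ∫ y in (0 : ℝ)..dx, g j y := Finset.sum_le_sum fun j _ => hterm j
    _ = 1 / dx * ∫ y in (0 : ℝ)..dx, ∑ j ∈ S, g j y := by
        rw [intervalIntegral.integral_finsetSum fun j _ => hg j, Finset.mul_sum]
    _ ≤ 1 / dx * ∫ _ in (0 : ℝ)..dx, totalVar k := by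
        gcongr
        refine intervalIntegral.integral_mono_on hdx.le ?_ intervalIntegrable_const
          fun y _ => sum_abs_sub_grid_le_totalVar hk hdx.le y S
        simpa only [Finset.sum_fn] using IntervalIntegrable.sum S fun j _ => hg j
    _ = totalVar k := by
        rw [intervalIntegral.integral_const, sub_zero, smul_eq_mul]
        field_simp

section NumFlux

variable {f k : ℝ → ℝ} {dx F L K : ℝ}

lemma abs_numFlux_sub_le (hf : Differentiable ℝ f) (hF : ∀ x, |f x| ≤ F)
    (hL : ∀ x, |deriv f x| ≤ L) (hK : ∀ j, |kAvg k dx j| ≤ K) (v : ℤ → ℝ) (j : ℤ) :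
    |numFlux f k dx v j - numFlux f k dx v (j - 1)|
      ≤ |kAvg k dx j - kAvg k dx (j - 1)| * F
        + K * L * (|v (j + 1) - v j| + |v j - v (j - 1)|) := by
  have hK0 : 0 ≤ K := (abs_nonneg _).trans (hK 0)
  have hsplit : numFlux f k dx v j - numFlux f k dx v (j - 1)
      = (kAvg k dx j - kAvg k dx (j - 1)) * f (v j)
        + kAvg k dx j * (signFlux f (kAvg k dx) v j - f (v j))
        - kAvg k dx (j - 1) * (signFlux f (kAvg k dx) v (j - 1) - f (v (j - 1 + 1))) := by
    rw [sub_add_cancel]; unfold numFlux; ring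
  have h₁ : |(kAvg k dx j - kAvg k dx (j - 1)) * f (v j)|
      ≤ |kAvg k dx j - kAvg k dx (j - 1)| * F := by
    rw [abs_mul]; exact mul_le_mul_of_nonneg_left (hF _) (abs_nonneg _)
  have h₂ : |kAvg k dx j * (signFlux f (kAvg k dx) v j - f (v j))|
      ≤ K * (L * |v (j + 1) - v j|) := by
    rw [abs_mul]
    exact mul_le_mul (hK j) (abs_signFlux_sub_left_le _ _ _ hf hL) (abs_nonneg _) hK0
  have h₃ : |kAvg k dx (j - 1) * (signFlux f (kAvg k dx) v (j - 1) - f (v (j - 1 + 1)))|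
      ≤ K * (L * |v j - v (j - 1)|) := by
    rw [abs_mul]
    simpa only [sub_add_cancel] using
      mul_le_mul (hK (j - 1)) (abs_signFlux_sub_right_le _ _ (j - 1) hf hL) (abs_nonneg _) hK0
  rw [hsplit]
  refine (abs_sub _ _).trans ((add_le_add (abs_add_le _ _) le_rfl).trans ?_)
  linarith

lemma sq_Dm_numFlux_le (hdx : 0 < dx) (hf : Differentiable ℝ f) (hF : ∀ x, |f x| ≤ F)
    (hL : ∀ x, |deriv f x| ≤ L) (hK : ∀ x, |k x| ≤ K) (v : ℤ → ℝ) (j : ℤ) :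
    Dm dx (numFlux f k dx v) j ^ 2
      ≤ 4 * K * F ^ 2 * |kAvg k dx j - kAvg k dx (j - 1)| / dx ^ 2
        + 4 * K ^ 2 * L ^ 2 * (Dm dx v j ^ 2 + Dp dx v j ^ 2) := by
  have hKavg := abs_kAvg_le hdx hK
  set t := |kAvg k dx j - kAvg k dx (j - 1)|
  set a := |v (j + 1) - v j|
  set b := |v j - v (j - 1)|
  set D := numFlux f k dx v j - numFlux f k dx v (j - 1)
  have hD : |D| ≤ t * F + K * L * (a + b) := abs_numFlux_sub_le hf hF hL hKavg v j
  have ht : 0 ≤ t := abs_nonneg _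
  have ht2K : t ≤ 2 * K := (abs_sub _ _).trans (by linarith [hKavg j, hKavg (j - 1)])
  -- `(X + Y)² ≤ 2X² + 2Y²`, with `t² ≤ 2Kt` since `t ≤ 2K`
  have hD2 : D ^ 2 ≤ 4 * K * F ^ 2 * t + 4 * K ^ 2 * L ^ 2 * (a ^ 2 + b ^ 2) := by
    have hsq : D ^ 2 ≤ (t * F + K * L * (a + b)) ^ 2 := by
      rw [← sq_abs D]; exact pow_le_pow_left₀ (abs_nonneg _) hD 2
    nlinarith [sq_nonneg (t * F - K * L * (a + b)), sq_nonneg (a - b), sq_nonneg (K * L),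
      mul_le_mul_of_nonneg_right ht2K (mul_nonneg ht (sq_nonneg F))]
  have ha : a ^ 2 = dx ^ 2 * Dp dx v j ^ 2 := by
    rw [sq_abs, Dp]; field_simp
  have hb : b ^ 2 = dx ^ 2 * Dm dx v j ^ 2 := by
    rw [sq_abs, Dm]; field_simp
  rw [Dm, div_pow, div_le_iff₀ (by positivity)]
  calc D ^ 2 ≤ 4 * K * F ^ 2 * t + 4 * K ^ 2 * L ^ 2 * (a ^ 2 + b ^ 2) := hD2
    _ = _ := by rw [ha, hb]; field_simp; ring

end NumFlux

lemma tsum_sq_Dm_numFlux_le {f k : ℝ → ℝ} {dx F L K : ℝ} (hdx : 0 < dx)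
    (hf : Differentiable ℝ f) (hF : ∀ x, |f x| ≤ F) (hL : ∀ x, |deriv f x| ≤ L)
    (hK : ∀ x, |k x| ≤ K) (hk : BoundedVariationOn k univ) (hkloc : LocallyIntegrable k volume)
    {v : ℤ → ℝ} (hm : Summable fun j => Dm dx v j ^ 2) (hp : Summable fun j => Dp dx v j ^ 2) :
    ∑' j, Dm dx (numFlux f k dx v) j ^ 2
      ≤ 4 * K * F ^ 2 * totalVar k / dx ^ 2
        + 4 * K ^ 2 * L ^ 2 * (∑' j, Dm dx v j ^ 2 + ∑' j, Dp dx v j ^ 2) := by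
  have hK0 : 0 ≤ K := (abs_nonneg _).trans (hK 0)
  have hTV : 0 ≤ totalVar k := ENNReal.toReal_nonneg
  refine tsum_le_of_sum_le' (by positivity) fun S => ?_
  calc ∑ j ∈ S, Dm dx (numFlux f k dx v) j ^ 2
      ≤ ∑ j ∈ S, (4 * K * F ^ 2 * |kAvg k dx j - kAvg k dx (j - 1)| / dx ^ 2
          + 4 * K ^ 2 * L ^ 2 * (Dm dx v j ^ 2 + Dp dx v j ^ 2)) :=
        Finset.sum_le_sum fun j _ => sq_Dm_numFlux_le hdx hf hF hL hK v j
    _ = 4 * K * F ^ 2 * (∑ j ∈ S, |kAvg k dx j - kAvg k dx (j - 1)|) / dx ^ 2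
          + 4 * K ^ 2 * L ^ 2 * (∑ j ∈ S, Dm dx v j ^ 2 + ∑ j ∈ S, Dp dx v j ^ 2) := by
        rw [Finset.sum_add_distrib, ← Finset.mul_sum, Finset.sum_add_distrib,
          Finset.mul_sum (a := 4 * K * F ^ 2), Finset.sum_div]
    _ ≤ _ := by
        gcongr
        · exact sum_abs_kAvg_sub_le_totalVar hdx hk hkloc S
        · exact hm.sum_le_tsum S fun j _ => sq_nonneg _
        · exact hp.sum_le_tsum S fun j _ => sq_nonneg _

lemma summable_sq_Dm_Dp {v : ℤ → ℝ} (dx : ℝ) {J : ℕ} (hv : ∀ j : ℤ, (J : ℤ) < |j| → v j = 0) :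
    (Summable fun j => Dm dx v j ^ 2) ∧ Summable fun j => Dp dx v j ^ 2 := by
  have hv' : ∀ j : ℤ, (J : ℤ) < j ∨ (J : ℤ) < -j → v j = 0 := fun j h => hv j (lt_abs.2 h)
  constructor <;>
  refine summable_of_ne_finset_zero (s := Finset.Icc (-(J : ℤ) - 1) (J + 1)) fun j hj => ?_ <;>
  rw [Finset.mem_Icc] at hj
  · rw [Dm, hv' j (by omega), hv' (j - 1) (by omega)]; ring
  · rw [Dp, hv' j (by omega), hv' (j + 1) (by omega)]; ring

/-- discrete `ℓ²` bound on the backward difference of the sign-adapted numerical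
flux `h^n_{j+1/2} = k_{j+1/2} f̂^n_{j+1/2}`. -/
theorem flux_difference_l2_bound (f k : ℝ → ℝ) (u : ℕ → ℤ → ℝ) (dx dt : ℝ)
    (hdx : 0 < dx) (hdt : 0 < dt)
    (hf : ContDiff ℝ 1 f)
    (hfb : ∃ C, ∀ x, |f x| ≤ C)
    (hf'b : ∃ C, ∀ x, |deriv f x| ≤ C)
    (hkb : ∃ C, ∀ x, |k x| ≤ C)
    (hkBV : BoundedVariationOn k Set.univ)
    (hkloc : LocallyIntegrable k volume)
    (hsupp : finSupp u) :
    ∀ n : ℕ,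
      dt * l2sq dx (Dm dx (numFlux f k dx (u n)))
        ≤ 4 * (dt / dx) * supNorm k * supNorm f ^ 2 * totalVar k
          + 4 * dt * supNorm k ^ 2 * supNorm (deriv f) ^ 2 *
              (l2sq dx (Dm dx (u n)) + l2sq dx (Dp dx (u n))) := by
  intro n
  obtain ⟨J, hJ⟩ := hsupp n
  obtain ⟨hm, hp⟩ := summable_sq_Dm_Dp dx hJ
  have key := tsum_sq_Dm_numFlux_le hdx (hf.differentiable one_ne_zero) (abs_le_supNorm hfb)
    (abs_le_supNorm hf'b) (abs_le_supNorm hkb) hkBV hkloc hm hp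
  unfold l2sq
  calc dt * (dx * ∑' j, Dm dx (numFlux f k dx (u n)) j ^ 2)
      ≤ dt * (dx * (4 * supNorm k * supNorm f ^ 2 * totalVar k / dx ^ 2
          + 4 * supNorm k ^ 2 * supNorm (deriv f) ^ 2 *
            (∑' j, Dm dx (u n) j ^ 2 + ∑' j, Dp dx (u n) j ^ 2))) := by gcongr
    _ = _ := by field_simp
end
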